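/- For the scheme K_{n_1} ≀ K_{n_2} ≀ ⋯ ≀ K_{n_d}: (a) for all i, h with 0 ≤ i < h ≤ d, A_i E_h^* = E_h^* A_i E_h^*; and (b) for all i, h with 0 ≤ h < i ≤ d, A_i E_h^* = E_i^* A_i E_h^*. -/

import Mathlib

open scoped Classical

noncomputable section

/-- Relation `R i` of the wreath product scheme `K_{n 1} ≀ ⋯ ≀ K_{n d}`
(coordinates 0-indexed): `R 0` is the identity relation; for `1 ≤ i ≤ d`,
`(x, y) ∈ R i` iff coordinate `i - 1` is the largest coordinate where `x`
and `y` differ. -/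
def wRel (d : ℕ) (n : Fin d → ℕ) (i : ℕ) (x y : ∀ k : Fin d, Fin (n k)) : Prop :=
  if h : 1 ≤ i ∧ i ≤ d then
    x ⟨i - 1, by omega⟩ ≠ y ⟨i - 1, by omega⟩ ∧
      ∀ k : Fin d, i - 1 < (k : ℕ) → x k = y k
  else x = y

/-- Adjacency matrix `A i`. -/
def wA (d : ℕ) (n : Fin d → ℕ) (i : ℕ) :
    Matrix (∀ k : Fin d, Fin (n k)) (∀ k : Fin d, Fin (n k)) ℂ :=
  Matrix.of fun x y => if wRel d n i x y then 1 else 0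

/-- The base vertex `(1, 1, …, 1)` (0-indexed: all coordinates `0`). -/
def wBase (d : ℕ) (n : Fin d → ℕ) (hn : ∀ k, 2 ≤ n k) : ∀ k : Fin d, Fin (n k) :=
  fun k => ⟨0, by have := hn k; omega⟩

/-- Dual idempotent `E_i^*` with respect to the base vertex. -/
def wE (d : ℕ) (n : Fin d → ℕ) (hn : ∀ k, 2 ≤ n k) (i : ℕ) :
    Matrix (∀ k : Fin d, Fin (n k)) (∀ k : Fin d, Fin (n k)) ℂ :=
  Matrix.of fun y z => if y = z ∧ wRel d n i (wBase d n hn) y then 1 else 0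

/-- `T₀`: the linear span of the triple products `E_i^* A_j E_h^*`. -/
def wT0 (d : ℕ) (n : Fin d → ℕ) (hn : ∀ k, 2 ≤ n k) :
    Submodule ℂ (Matrix (∀ k : Fin d, Fin (n k)) (∀ k : Fin d, Fin (n k)) ℂ) :=
  Submodule.span ℂ
    {M | ∃ i j h : ℕ, i ≤ d ∧ j ≤ d ∧ h ≤ d ∧
      M = wE d n hn i * wA d n j * wE d n hn h}

/-- The Terwilliger algebra: the unital subalgebra generated by the `A i`
and the `E_i^*`. -/
def wT (d : ℕ) (n : Fin d → ℕ) (hn : ∀ k, 2 ≤ n k) :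
    Subalgebra ℂ (Matrix (∀ k : Fin d, Fin (n k)) (∀ k : Fin d, Fin (n k)) ℂ) :=
  Algebra.adjoin ℂ
    ({M | ∃ i ≤ d, M = wA d n i} ∪ {M | ∃ i ≤ d, M = wE d n hn i})

/-! Write `x ≈ₘ y` (`AgreeFrom m x y`) when `x` and `y` agree in all coordinates `≥ m`. These are equivalence
relations, coarser as `m` grows, and `R i` is the layer `≈ᵢ \ ≈ᵢ₋₁`. If `x R_i z` with
`i < h` and `z` lies in layer `h` around the base vertex, then `x ≈ᵢ z` moves neither
membership in `≈ₕ` nor in `≈ₕ₋₁`, so `x` lies in layer `h` too; if `h < i`, then the base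
vertex is `≈ᵢ₋₁`-related to `z`, so `x` lies in layer `i`. Since `E_h^*` is the diagonal
projection onto layer `h`, these support statements are exactly (a) and (b). -/

namespace Matrix

variable {X α : Type*} [Fintype X] [DecidableEq X] [Semiring α]

theorem mul_diagonal_ite_eq_diagonal_ite_mul_mul_diagonal_ite (M : Matrix X X α)
    (p q : X → Prop) [DecidablePred p] [DecidablePred q]
    (hM : ∀ x z, M x z ≠ 0 → q z → p x) :
    M * diagonal (fun z => if q z then 1 else 0) =
      diagonal (fun x => if p x then 1 else 0) * M * diagonal (fun z => if q z then 1 else 0) := by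
  ext x z
  simp only [mul_diagonal, diagonal_mul]
  by_cases hq : q z
  · by_cases hp : p x
    · simp [hp]
    · have hMxz : M x z = 0 := by_contra fun hne => hp (hM x z hne hq)
      simp [hp, hMxz]
  · simp [hq]

end Matrix

section Wreath

variable {d : ℕ} {n : Fin d → ℕ}

def AgreeFrom (m : ℕ) (x y : ∀ k : Fin d, Fin (n k)) : Prop :=
  ∀ k : Fin d, m ≤ k → x k = y k

theorem AgreeFrom.mono {m m' : ℕ} {x y : ∀ k : Fin d, Fin (n k)} (hm : m ≤ m')
    (hxy : AgreeFrom m x y) : AgreeFrom m' x y :=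
  fun k hk => hxy k (hm.trans hk)

theorem AgreeFrom.symm {m : ℕ} {x y : ∀ k : Fin d, Fin (n k)} (hxy : AgreeFrom m x y) :
    AgreeFrom m y x :=
  fun k hk => (hxy k hk).symm

theorem AgreeFrom.trans {m : ℕ} {x y z : ∀ k : Fin d, Fin (n k)} (hxy : AgreeFrom m x y)
    (hyz : AgreeFrom m y z) : AgreeFrom m x z :=
  fun k hk => (hxy k hk).trans (hyz k hk)

theorem agreeFrom_of_wRel {i : ℕ} {x y : ∀ k : Fin d, Fin (n k)} (hxy : wRel d n i x y) :
    AgreeFrom i x y := by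
  unfold wRel at hxy
  split_ifs at hxy with hi
  · exact fun k hk => hxy.2 k (by omega)
  · exact fun k _ => congrFun hxy k

theorem wRel_iff_agreeFrom {i : ℕ} (hi : 1 ≤ i) (hid : i ≤ d) (x y : ∀ k : Fin d, Fin (n k)) :
    wRel d n i x y ↔ AgreeFrom i x y ∧ ¬AgreeFrom (i - 1) x y := by
  rw [wRel, dif_pos ⟨hi, hid⟩]
  constructor
  · rintro ⟨hne, hagree⟩
    exact ⟨fun k hk => hagree k (by omega), fun h => hne (h _ le_rfl)⟩
  · rintro ⟨hagree, hnot⟩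
    refine ⟨fun heq => hnot fun k hk => ?_, fun k hk => hagree k (by omega)⟩
    rcases Nat.lt_or_eq_of_le hk with hlt | hEq
    · exact hagree k (by omega)
    · have hk' : k = ⟨i - 1, by omega⟩ := Fin.ext hEq.symm
      rwa [hk']

theorem wRel_of_wRel_of_lt {i h : ℕ} (hih : i < h) (hhd : h ≤ d)
    {o x z : ∀ k : Fin d, Fin (n k)} (hxz : wRel d n i x z) (hoz : wRel d n h o z) :
    wRel d n h o x := by
  rw [wRel_iff_agreeFrom (by omega) hhd] at hoz ⊢
  have hxz' : AgreeFrom (h - 1) x z := (agreeFrom_of_wRel hxz).mono (by omega)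
  exact ⟨hoz.1.trans (hxz'.mono (by omega)).symm, fun hox => hoz.2 (hox.trans hxz')⟩

theorem wRel_of_wRel_of_gt {i h : ℕ} (hhi : h < i) (hid : i ≤ d)
    {o x z : ∀ k : Fin d, Fin (n k)} (hxz : wRel d n i x z) (hoz : wRel d n h o z) :
    wRel d n i o x := by
  rw [wRel_iff_agreeFrom (by omega) hid] at hxz ⊢
  have hoz' : AgreeFrom (i - 1) o z := (agreeFrom_of_wRel hoz).mono (by omega)
  exact ⟨(hoz'.mono (by omega)).trans hxz.1.symm, fun hox => hxz.2 (hox.symm.trans hoz')⟩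

theorem wRel_of_wA_apply_ne_zero {i : ℕ} {x y : ∀ k : Fin d, Fin (n k)}
    (h : wA d n i x y ≠ 0) : wRel d n i x y := by
  by_contra hr
  exact h (by simp [wA, hr])

theorem wE_eq_diagonal (hn : ∀ k, 2 ≤ n k) (h : ℕ) :
    wE d n hn h = Matrix.diagonal fun y => if wRel d n h (wBase d n hn) y then 1 else 0 := by
  ext y z
  by_cases hyz : y = z
  · subst hyz; simp [wE]
  · simp [wE, hyz]

end Wreath

theorem AE_triple_wreath_general (d : ℕ) (n : Fin d → ℕ) (hn : ∀ k, 2 ≤ n k) :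
    (∀ i h : ℕ, i < h → h ≤ d →
        wA d n i * wE d n hn h = wE d n hn h * wA d n i * wE d n hn h) ∧
      (∀ i h : ℕ, h < i → i ≤ d →
        wA d n i * wE d n hn h = wE d n hn i * wA d n i * wE d n hn h) := by
  simp only [wE_eq_diagonal]
  refine ⟨fun i h hih hhd => ?_, fun i h hhi hid => ?_⟩ <;>
    refine Matrix.mul_diagonal_ite_eq_diagonal_ite_mul_mul_diagonal_ite _ _ _ fun x z hxz hz => ?_
  · exact wRel_of_wRel_of_lt hih hhd (wRel_of_wA_apply_ne_zero hxz) hz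
  · exact wRel_of_wRel_of_gt hhi hid (wRel_of_wA_apply_ne_zero hxz) hz

/-- For the scheme `K_{n_1} ≀ ⋯ ≀ K_{n_d}`:
(a) for `0 ≤ i < h ≤ d`, `A_i E_h^* = E_h^* A_i E_h^*`; and
(b) for `0 ≤ h < i ≤ d`, `A_i E_h^* = E_i^* A_i E_h^*`. -/
theorem AE_triple_wreath (d : ℕ) (hd : 1 ≤ d) (n : Fin d → ℕ) (hn : ∀ k, 2 ≤ n k) :
    (∀ i h : ℕ, i < h → h ≤ d →
        wA d n i * wE d n hn h = wE d n hn h * wA d n i * wE d n hn h) ∧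
      (∀ i h : ℕ, h < i → i ≤ d →
        wA d n i * wE d n hn h = wE d n hn i * wA d n i * wE d n hn h) :=
  AE_triple_wreath_general d n hn
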